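/- Let Φ(z) = νz − d for all z ∈ ℂ with |ν| ≤ 1, and suppose the composition operator C_Φ is bounded on H_E(ζ). Then C_Φ is a co-isometry if and only if C_Φ is unitary. -/

import Mathlib

open Filter ContinuousLinearMap
open scoped ComplexConjugate

noncomputable section

/-- The weighted Hardy space of entire functions `H_E(ζ)`, realized as the Hilbert space of
coefficient sequences: an entire function `g z = ∑ bₙ zⁿ` with `∑ |bₙ|² ζₙ² < ∞` is encoded by
the `ℓ²`-sequence `n ↦ bₙ * ζₙ`.  With this identification the `lp`-inner product
`⟪f, g⟫ = ∑ conj (f n) * g n` is exactly `∑ conj bₙ * cₙ * ζₙ²` (Mathlib's convention: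
conjugate-linear in the first variable). -/
abbrev HE (_ζ : ℕ → ℝ) : Type := lp (fun _ : ℕ => ℂ) 2

/-- The `n`-th Taylor coefficient `bₙ` of an element of `H_E(ζ)`. -/
def HE.coeff (ζ : ℕ → ℝ) (f : HE ζ) (n : ℕ) : ℂ := f n / (ζ n : ℂ)

/-- The entire function `z ↦ ∑ bₙ zⁿ` represented by an element of `H_E(ζ)`. -/
def HE.toFun (ζ : ℕ → ℝ) (f : HE ζ) : ℂ → ℂ := fun z => ∑' n, HE.coeff ζ f n * z ^ n

/-
A co-isometry `T` has `T T* = I`, so `T` is surjective; it is unitary as soon as it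
is injective. Surjectivity forces `ν ≠ 0`, since for `ν = 0` every `C_Φ f` is constant while
`H_E(ζ)` contains `z`. For `ν ≠ 0` the map `Φ` is a bijection of `ℂ`, so `C_Φ f = 0` makes the
entire function of `f` vanish identically, and `f = 0` by uniqueness of Taylor coefficients.
-/

theorem ContinuousLinearMap.adjoint_comp_self_eq_id_of_injective
    {𝕜 E : Type*} [RCLike 𝕜] [NormedAddCommGroup E] [InnerProductSpace 𝕜 E] [CompleteSpace E]
    {T : E →L[𝕜] E} (hT : T.comp (adjoint T) = .id 𝕜 E) (hinj : Function.Injective T) :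
    (adjoint T).comp T = .id 𝕜 E := by
  have hright : Function.RightInverse (adjoint T) T := fun g => congr($hT g)
  exact ContinuousLinearMap.ext (hright.leftInverse_of_injective hinj)

namespace HE

variable {ζ : ℕ → ℝ}

theorem norm_coeff_le (hζ : ∀ n, 0 < ζ n) (f : HE ζ) (n : ℕ) : ‖coeff ζ f n‖ ≤ ‖f‖ / ζ n := by
  rw [coeff, norm_div, Complex.norm_of_nonneg (hζ n).le]
  exact div_le_div_of_nonneg_right (lp.norm_apply_le_norm two_ne_zero f n) (hζ n).le

theorem eventually_pow_le (hζ : ∀ n, 0 < ζ n)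
    (hlim : Tendsto (fun n : ℕ => (ζ n) ^ ((1 : ℝ) / n)) atTop atTop) {R : ℝ} (hR : 0 ≤ R) :
    ∀ᶠ n in atTop, R ^ n ≤ ζ n := by
  filter_upwards [hlim.eventually_ge_atTop R, eventually_ne_atTop 0] with n hn hn0
  calc R ^ n ≤ (ζ n ^ ((1 : ℝ) / n)) ^ n := pow_le_pow_left₀ hR hn n
    _ = ζ n := by rw [one_div, Real.rpow_inv_natCast_pow (hζ n).le hn0]

theorem summable_norm_coeff_mul_pow (hζ : ∀ n, 0 < ζ n)
    (hlim : Tendsto (fun n : ℕ => (ζ n) ^ ((1 : ℝ) / n)) atTop atTop) (f : HE ζ)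
    {r : ℝ} (hr : 0 ≤ r) : Summable fun n => ‖coeff ζ f n‖ * r ^ n := by
  have hq : r / (r + 1) < 1 := (div_lt_one (by positivity)).2 (lt_add_one r)
  refine ((summable_geometric_of_lt_one (by positivity) hq).mul_left ‖f‖)
    |>.of_norm_bounded_eventually_nat ?_
  filter_upwards [eventually_pow_le hζ hlim (by positivity : 0 ≤ r + 1)] with n hn
  rw [Real.norm_of_nonneg (by positivity), div_pow]
  calc ‖coeff ζ f n‖ * r ^ n ≤ ‖f‖ / ζ n * r ^ n := by gcongr; exact norm_coeff_le hζ f n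
    _ ≤ ‖f‖ / (r + 1) ^ n * r ^ n := by gcongr
    _ = ‖f‖ * (r ^ n / (r + 1) ^ n) := by ring

theorem hasSum_toFun (hζ : ∀ n, 0 < ζ n)
    (hlim : Tendsto (fun n : ℕ => (ζ n) ^ ((1 : ℝ) / n)) atTop atTop) (f : HE ζ) (z : ℂ) :
    HasSum (fun n => coeff ζ f n * z ^ n) (toFun ζ f z) :=
  Summable.hasSum <| .of_norm <| by
    simpa only [norm_mul, norm_pow] using summable_norm_coeff_mul_pow hζ hlim f (norm_nonneg z)

theorem hasFPowerSeriesOnBall_toFun (hζ : ∀ n, 0 < ζ n)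
    (hlim : Tendsto (fun n : ℕ => (ζ n) ^ ((1 : ℝ) / n)) atTop atTop) (f : HE ζ) :
    HasFPowerSeriesOnBall (toFun ζ f) (.ofScalars ℂ (coeff ζ f)) 0 ⊤ where
  r_le := by
    refine (FormalMultilinearSeries.radius_eq_top_of_summable_norm _ fun r => ?_).ge
    simpa only [FormalMultilinearSeries.ofScalars_norm] using
      summable_norm_coeff_mul_pow hζ hlim f r.coe_nonneg
  r_pos := ENNReal.zero_lt_top
  hasSum {y} _ := by
    simpa only [FormalMultilinearSeries.ofScalars_apply_eq, smul_eq_mul, zero_add] using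
      hasSum_toFun hζ hlim f y

theorem eq_zero_of_toFun_eq_zero (hζ : ∀ n, 0 < ζ n)
    (hlim : Tendsto (fun n : ℕ => (ζ n) ^ ((1 : ℝ) / n)) atTop atTop) {f : HE ζ}
    (h : toFun ζ f = 0) : f = 0 := by
  have hseries : FormalMultilinearSeries.ofScalars ℂ (coeff ζ f) = 0 :=
    (h ▸ (hasFPowerSeriesOnBall_toFun hζ hlim f).hasFPowerSeriesAt).eq_zero
  ext n
  have hcoeff : coeff ζ f n = 0 :=
    (FormalMultilinearSeries.ofScalars_eq_zero ℂ n).1 congr($hseries n)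
  simpa [coeff, (hζ n).ne'] using hcoeff

theorem toFun_single (n : ℕ) (c : ℂ) (z : ℂ) :
    toFun ζ (lp.single 2 n c) z = c / ζ n * z ^ n := by
  rw [toFun, tsum_eq_single n fun m hm => by simp [coeff, hm]]
  simp [coeff]

section Composition

variable {ν d : ℂ} {T : HE ζ →L[ℂ] HE ζ}

theorem injective_of_slope_ne_zero (hζ : ∀ n, 0 < ζ n)
    (hlim : Tendsto (fun n : ℕ => (ζ n) ^ ((1 : ℝ) / n)) atTop atTop)
    (hT : ∀ f : HE ζ, ∀ z : ℂ, toFun ζ (T f) z = toFun ζ f (ν * z - d)) (hν : ν ≠ 0) :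
    Function.Injective T := by
  refine (injective_iff_map_eq_zero T).2 fun f hf => eq_zero_of_toFun_eq_zero hζ hlim ?_
  funext w
  have hw : ν * ((w + d) / ν) - d = w := by field_simp; ring
  rw [← hw, ← hT, hf]
  simp [toFun, coeff]

theorem slope_ne_zero_of_surjective (hζ : ∀ n, 0 < ζ n)
    (hT : ∀ f : HE ζ, ∀ z : ℂ, toFun ζ (T f) z = toFun ζ f (ν * z - d))
    (hsurj : Function.Surjective T) : ν ≠ 0 := by
  rintro rfl
  obtain ⟨f, hf⟩ := hsurj (lp.single 2 1 1)
  have hconst : toFun ζ (T f) 1 = toFun ζ (T f) 0 := by rw [hT, hT]; simp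
  rw [hf, toFun_single, toFun_single] at hconst
  simp [(hζ 1).ne'] at hconst

end Composition

end HE

theorem composition_coisometry_iff_unitary_general
    (ζ : ℕ → ℝ) (hζ : ∀ n, 0 < ζ n)
    (hlim : Tendsto (fun n : ℕ => (ζ n) ^ ((1 : ℝ) / n)) atTop atTop)
    (ν d : ℂ)
    (T : HE ζ →L[ℂ] HE ζ)
    (hT : ∀ f : HE ζ, ∀ z : ℂ, HE.toFun ζ (T f) z = HE.toFun ζ f (ν * z - d)) :
    T.comp (adjoint T) = ContinuousLinearMap.id ℂ (HE ζ) ↔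
      (T.comp (adjoint T) = ContinuousLinearMap.id ℂ (HE ζ) ∧
        (adjoint T).comp T = ContinuousLinearMap.id ℂ (HE ζ)) := by
  refine ⟨fun hcoiso => ⟨hcoiso, ?_⟩, And.left⟩
  have hsurj : Function.Surjective T := fun g => ⟨adjoint T g, congr($hcoiso g)⟩
  have hν : ν ≠ 0 := HE.slope_ne_zero_of_surjective hζ hT hsurj
  exact adjoint_comp_self_eq_id_of_injective hcoiso (HE.injective_of_slope_ne_zero hζ hlim hT hν)

/-- For `Φ z = ν z - d` with `|ν| ≤ 1` inducing a bounded composition operator on `H_E(ζ)`: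
`C_Φ` is a co-isometry iff it is unitary. -/
theorem composition_coisometry_iff_unitary
    (ζ : ℕ → ℝ) (hζ : ∀ n, 0 < ζ n)
    (hlim : Tendsto (fun n : ℕ => (ζ n) ^ ((1 : ℝ) / n)) atTop atTop)
    (ν d : ℂ) (hν : ‖ν‖ ≤ 1)
    (T : HE ζ →L[ℂ] HE ζ)
    (hT : ∀ f : HE ζ, ∀ z : ℂ, HE.toFun ζ (T f) z = HE.toFun ζ f (ν * z - d)) :
    T.comp (adjoint T) = ContinuousLinearMap.id ℂ (HE ζ) ↔
      (T.comp (adjoint T) = ContinuousLinearMap.id ℂ (HE ζ) ∧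
        (adjoint T).comp T = ContinuousLinearMap.id ℂ (HE ζ)) :=
  composition_coisometry_iff_unitary_general ζ hζ hlim ν d T hT
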